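/- arXiv:1911.10036 — 4 statements merged into one kernel-verified Lean document; each statement's English description precedes it below -/
import Mathlib

section
/- If v is uniformly distributed on [0,1], then z = -log(-log(v)/exp(μ) + exp(-z_0)) is distributed according to the Gumbel distribution with location μ truncated at z_0: its CDF is F_μ(min(t, z_0))/F_μ(z_0), where F_μ(t) = exp(-exp(-t+μ)). -/
open MeasureTheory

/-- Gumbel CDF with location `μ`. -/
noncomputable def gumbelCDF (μ z : ℝ) : ℝ := Real.exp (-Real.exp (-z + μ))

/-! The sample `z(v)` satisfies `F_μ(z(v)) = v · F_μ(z₀)`, i.e. it is the inverse CDF of the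
truncated Gumbel law evaluated at `v`. As `F_μ` is strictly increasing, `z(v) ≤ t` holds exactly
when `v ≤ F_μ(t) / F_μ(z₀)`, and the uniform measure of that event is `min (F_μ(t) / F_μ(z₀)) 1`,
which is `F_μ(min t z₀) / F_μ(z₀)`. -/

noncomputable def truncGumbelSample (μ z₀ v : ℝ) : ℝ :=
  -Real.log (-Real.log v / Real.exp μ + Real.exp (-z₀))

theorem gumbelCDF_strictMono (μ : ℝ) : StrictMono (gumbelCDF μ) := fun _ _ h => by
  unfold gumbelCDF
  gcongr

theorem gumbelCDF_pos (μ z : ℝ) : 0 < gumbelCDF μ z := Real.exp_pos _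

theorem gumbelCDF_truncGumbelSample (μ z₀ : ℝ) {v : ℝ} (hv : v ∈ Set.Ioc 0 1) :
    gumbelCDF μ (truncGumbelSample μ z₀ v) = v * gumbelCDF μ z₀ := by
  have hw : 0 < -Real.log v / Real.exp μ + Real.exp (-z₀) :=
    add_pos_of_nonneg_of_pos
      (div_nonneg (neg_nonneg.2 (Real.log_nonpos hv.1.le hv.2)) (Real.exp_pos μ).le)
      (Real.exp_pos _)
  have hexp : Real.exp (Real.log (-Real.log v / Real.exp μ + Real.exp (-z₀)) + μ)
      = -Real.log v + Real.exp (-z₀ + μ) := by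
    rw [Real.exp_add, Real.exp_log hw, Real.exp_add]
    field_simp
  unfold gumbelCDF truncGumbelSample
  rw [neg_neg, hexp, neg_add, neg_neg, Real.exp_add, Real.exp_log hv.1]

theorem truncGumbelSample_le_iff (μ z₀ t : ℝ) {v : ℝ} (hv : v ∈ Set.Ioc 0 1) :
    truncGumbelSample μ z₀ v ≤ t ↔ v ≤ gumbelCDF μ t / gumbelCDF μ z₀ := by
  rw [← (gumbelCDF_strictMono μ).le_iff_le, gumbelCDF_truncGumbelSample μ z₀ hv,
    le_div_iff₀ (gumbelCDF_pos μ z₀)]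

theorem volume_restrict_unitInterval_of_mem_iff_le {S : Set ℝ} {c : ℝ}
    (hS : ∀ v ∈ Set.Ioc (0 : ℝ) 1, v ∈ S ↔ v ≤ c) :
    volume.restrict (Set.Icc (0 : ℝ) 1) S = ENNReal.ofReal (min c 1) := by
  have hinter : S ∩ Set.Ioc 0 1 = Set.Ioc 0 (min c 1) := by
    ext v
    simp only [Set.mem_inter_iff, Set.mem_Ioc, le_min_iff]
    constructor
    · rintro ⟨hvS, hv0, hv1⟩
      exact ⟨hv0, (hS v ⟨hv0, hv1⟩).1 hvS, hv1⟩
    · rintro ⟨hv0, hvc, hv1⟩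
      exact ⟨(hS v ⟨hv0, hv1⟩).2 hvc, hv0, hv1⟩
  rw [Measure.restrict_apply' measurableSet_Icc,
    measure_congr ((Filter.EventuallyEq.refl _ S).inter Ioc_ae_eq_Icc.symm), hinter,
    Real.volume_Ioc, sub_zero]

/-- If `v` is uniform on `[0,1]`, then `z = -log(-log(v)/exp μ + exp (-z₀))` has the Gumbel
distribution with location `μ` truncated at `z₀`: its CDF at `t` is
`F_μ(min t z₀) / F_μ(z₀)`. -/
theorem truncated_gumbel_reparametrization (μ z₀ t : ℝ) :
    (volume.restrict (Set.Icc (0:ℝ) 1))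
        {v : ℝ | -Real.log (-(Real.log v) / Real.exp μ + Real.exp (-z₀)) ≤ t}
      = ENNReal.ofReal (gumbelCDF μ (min t z₀) / gumbelCDF μ z₀) := by
  have hcdf : gumbelCDF μ (min t z₀) / gumbelCDF μ z₀
      = min (gumbelCDF μ t / gumbelCDF μ z₀) 1 := by
    rw [(gumbelCDF_strictMono μ).monotone.map_min, ← min_div_div_right (gumbelCDF_pos μ z₀).le,
      div_self (gumbelCDF_pos μ z₀).ne']
  rw [hcdf]
  exact volume_restrict_unitInterval_of_mem_iff_le fun v hv =>
    truncGumbelSample_le_iff μ z₀ t hv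
end

section
/- The mode of the Plackett-Luce distribution with scores θ is the permutation sorting the scores in descending order: if b⁰ satisfies θ_{b⁰_1} ≥ θ_{b⁰_2} ≥ ... ≥ θ_{b⁰_k}, then for every permutation b, p(b⁰ | θ) ≥ p(b | θ). -/
lemma sum_le_sum_of_card_eq {α : Type*} [DecidableEq α] (f : α → ℝ) (S₀ S : Finset α)
    (hcard : S.card = S₀.card)
    (h : ∀ i ∈ S₀, ∀ i' ∉ S₀, f i ≤ f i') :
    ∑ i ∈ S₀, f i ≤ ∑ i ∈ S, f i := by
  have h1 : (S₀ \ S).card = (S \ S₀).card := by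
    have a1 := Finset.card_sdiff_add_card_inter S₀ S
    have a2 := Finset.card_sdiff_add_card_inter S S₀
    rw [Finset.inter_comm] at a1
    omega
  have key : ∑ i ∈ S₀ \ S, f i ≤ ∑ i ∈ S \ S₀, f i := by
    rcases Finset.eq_empty_or_nonempty (S \ S₀) with he | hne
    · have : S₀ \ S = ∅ := Finset.card_eq_zero.mp (by rw [h1, he]; simp)
      simp [this, he]
    · obtain ⟨y₀, hy₀, hy₀min⟩ := Finset.exists_min_image (S \ S₀) f hne
      have hy₀n : y₀ ∉ S₀ := (Finset.mem_sdiff.mp hy₀).2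
      calc ∑ i ∈ S₀ \ S, f i ≤ (S₀ \ S).card • f y₀ := by
            apply Finset.sum_le_card_nsmul
            intro x hx
            exact h x (Finset.mem_sdiff.mp hx).1 y₀ hy₀n
        _ = (S \ S₀).card • f y₀ := by rw [h1]
        _ ≤ ∑ i ∈ S \ S₀, f i := Finset.card_nsmul_le_sum _ _ _ (fun y hy => hy₀min y hy)
  have e1 := Finset.sum_inter_add_sum_sdiff S₀ S f
  have e2 := Finset.sum_inter_add_sum_sdiff S S₀ f
  rw [Finset.inter_comm] at e1
  linarith

/-- Plackett–Luce probability of permutation `b` under scores `θ`. -/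
noncomputable def plackettLuce {k : ℕ} (θ : Fin k → ℝ) (b : Equiv.Perm (Fin k)) : ℝ :=
  ∏ j : Fin k,
    Real.exp (θ (b j)) / ∑ u ∈ Finset.univ.filter (fun u => j ≤ u), Real.exp (θ (b u))

lemma denom_pos {k : ℕ} (θ : Fin k → ℝ) (b : Equiv.Perm (Fin k)) (j : Fin k) :
    0 < ∑ u ∈ Finset.univ.filter (fun u => j ≤ u), Real.exp (θ (b u)) := by
  apply Finset.sum_pos (fun u _ => Real.exp_pos _)
  exact ⟨j, by simp⟩

lemma denom_eq_image {k : ℕ} (θ : Fin k → ℝ) (b : Equiv.Perm (Fin k)) (j : Fin k) :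
    ∑ u ∈ Finset.univ.filter (fun u => j ≤ u), Real.exp (θ (b u))
      = ∑ i ∈ (Finset.univ.filter (fun u => j ≤ u)).image b, Real.exp (θ i) := by
  rw [Finset.sum_image (fun x _ y _ hxy => b.injective hxy)]

/-- The mode of the Plackett–Luce distribution is the permutation sorting the scores in
descending order. -/
theorem plackett_luce_mode (k : ℕ) (θ : Fin k → ℝ) (b₀ : Equiv.Perm (Fin k))
    (hsort : ∀ i j : Fin k, i ≤ j → θ (b₀ j) ≤ θ (b₀ i)) (b : Equiv.Perm (Fin k)) :
    plackettLuce θ b ≤ plackettLuce θ b₀ := by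
  have hnum : ∀ c : Equiv.Perm (Fin k),
      ∏ j : Fin k, Real.exp (θ (c j)) = ∏ j : Fin k, Real.exp (θ j) :=
    fun c => Equiv.prod_comp c (fun i => Real.exp (θ i))
  have hsplit : ∀ c : Equiv.Perm (Fin k), plackettLuce θ c =
      (∏ j : Fin k, Real.exp (θ j)) /
        ∏ j : Fin k, ∑ u ∈ Finset.univ.filter (fun u => j ≤ u), Real.exp (θ (c u)) := by
    intro c
    rw [plackettLuce, Finset.prod_div_distrib, hnum]
  rw [hsplit b, hsplit b₀]
  have hdpos : ∀ (c : Equiv.Perm (Fin k)),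
      0 < ∏ j : Fin k, ∑ u ∈ Finset.univ.filter (fun u => j ≤ u), Real.exp (θ (c u)) :=
    fun c => Finset.prod_pos (fun j _ => denom_pos θ c j)
  apply div_le_div_of_nonneg_left (Finset.prod_nonneg (fun j _ => (Real.exp_pos _).le))
    (hdpos b₀)
  apply Finset.prod_le_prod (fun j _ => (denom_pos θ b₀ j).le)
  intro j _
  rw [denom_eq_image θ b j, denom_eq_image θ b₀ j]
  apply sum_le_sum_of_card_eq
  · rw [Finset.card_image_of_injective _ b.injective,
      Finset.card_image_of_injective _ b₀.injective]
  · intro i hi i' hi'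
    obtain ⟨u, hu, rfl⟩ := Finset.mem_image.mp hi
    have hju : j ≤ u := (Finset.mem_filter.mp hu).2
    have hv : ¬ j ≤ b₀.symm i' := fun hle =>
      hi' (Finset.mem_image.mpr ⟨b₀.symm i', Finset.mem_filter.mpr ⟨Finset.mem_univ _, hle⟩,
        b₀.apply_symm_apply i'⟩)
    have hle : b₀.symm i' ≤ u := le_trans (le_of_not_ge hv) hju
    have := hsort (b₀.symm i') u hle
    rw [b₀.apply_symm_apply] at this
    exact Real.exp_le_exp.mpr this
end

section
/- If b is a permutation of {1, ..., k} that sorts θ in descending order, i.e., θ_{b_1} ≥ θ_{b_2} ≥ ... ≥ θ_{b_k}, then for any permutation c of {1, ..., k}, ∏_{j=1}^k exp(θ_{b_j})/∑_{u=j}^k exp(θ_{b_u}) ≥ ∏_{j=1}^k exp(θ_{c_j})/∑_{u=j}^k exp(θ_{c_u}). -/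
open Finset

/-- Sum over a finset of known cardinality as a sum over its sorted enumeration. -/
lemma sum_eq_sum_orderEmbOfFin {k m : ℕ} (g : Fin k → ℝ) (s : Finset (Fin k))
    (h : s.card = m) :
    ∑ u ∈ s, g u = ∑ i : Fin m, g (s.orderEmbOfFin h i) := by
  have him : Finset.univ.image (s.orderEmbOfFin h) = s := by
    apply Finset.coe_injective
    simp [Set.image_univ]
  calc ∑ u ∈ s, g u = ∑ u ∈ Finset.univ.image (s.orderEmbOfFin h), g u := by rw [him]
    _ = ∑ i : Fin m, g (s.orderEmbOfFin h i) :=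
        Finset.sum_image (fun x _ y _ hxy => (s.orderEmbOfFin h).injective hxy)

/-- The `i`-th smallest element of an `m`-subset of `Fin k` is at most `k - m + i`. -/
lemma orderEmbOfFin_le_bound {k m : ℕ} (s : Finset (Fin k)) (h : s.card = m) (i : Fin m) :
    (s.orderEmbOfFin h i : ℕ) ≤ k - m + i := by
  have hm : m ≤ k := by
    have := Finset.card_le_univ s
    simpa [h] using this
  have hsub : (Finset.Ici i).image (s.orderEmbOfFin h) ⊆ Finset.Ici (s.orderEmbOfFin h i) := by
    intro x hx
    simp only [Finset.mem_image, Finset.mem_Ici] at hx ⊢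
    obtain ⟨l, hl, rfl⟩ := hx
    exact (s.orderEmbOfFin h).monotone hl
  have hcard := Finset.card_le_card hsub
  rw [Finset.card_image_of_injective _ (s.orderEmbOfFin h).injective,
    Fin.card_Ici, Fin.card_Ici] at hcard
  have h1 := (s.orderEmbOfFin h i).isLt
  have h2 := i.isLt
  omega

/-- For an antitone `g`, the tail sum is minimal among sums over sets of the same size. -/
lemma tail_sum_le {k : ℕ} (g : Fin k → ℝ) (hg : ∀ i j : Fin k, i ≤ j → g j ≤ g i)
    (j : Fin k) (T : Finset (Fin k)) (hT : T.card = k - (j : ℕ)) :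
    ∑ u ∈ Finset.Ici j, g u ≤ ∑ u ∈ T, g u := by
  have hIci : (Finset.Ici j).card = k - (j : ℕ) := by
    simpa using Fin.card_Ici j
  rw [sum_eq_sum_orderEmbOfFin g _ hIci, sum_eq_sum_orderEmbOfFin g _ hT]
  apply Finset.sum_le_sum
  intro i _
  apply hg
  -- (Ici j).orderEmbOfFin is `fun i => j + i`
  have hf : (fun i : Fin (k - (j : ℕ)) => (⟨(j : ℕ) + (i : ℕ), by omega⟩ : Fin k))
      = (Finset.Ici j).orderEmbOfFin hIci := by
    apply Finset.orderEmbOfFin_unique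
    · intro x
      simp [Finset.mem_Ici, Fin.le_def]
    · intro x y hxy
      simp only [Fin.mk_lt_mk]
      omega
  have hb := orderEmbOfFin_le_bound T hT i
  rw [← hf]
  rw [Fin.le_def]
  have hj : (j : ℕ) < k := j.isLt
  simp only []
  omega

/-- The descending-order permutation maximizes the product of Plackett–Luce factors:
if `θ_{b_1} ≥ … ≥ θ_{b_k}` then for any permutation `c`,
`∏_j exp θ_{b_j} / ∑_{u ≥ j} exp θ_{b_u} ≥ ∏_j exp θ_{c_j} / ∑_{u ≥ j} exp θ_{c_u}`. -/
theorem descending_maximizes_plackett_luce (k : ℕ) (θ : Fin k → ℝ)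
    (b c : Equiv.Perm (Fin k)) (hsort : ∀ i j : Fin k, i ≤ j → θ (b j) ≤ θ (b i)) :
    ∏ j : Fin k,
        Real.exp (θ (c j)) /
          ∑ u ∈ Finset.univ.filter (fun u => j ≤ u), Real.exp (θ (c u))
      ≤ ∏ j : Fin k,
          Real.exp (θ (b j)) /
            ∑ u ∈ Finset.univ.filter (fun u => j ≤ u), Real.exp (θ (b u)) := by
  have hfilter : ∀ j : Fin k, Finset.univ.filter (fun u => j ≤ u) = Finset.Ici j := by
    intro j; ext u; simp
  simp only [hfilter]
  have hpos : ∀ (σ : Equiv.Perm (Fin k)) (j : Fin k),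
      0 < ∑ u ∈ Finset.Ici j, Real.exp (θ (σ u)) := by
    intro σ j
    exact Finset.sum_pos (fun i _ => Real.exp_pos _) ⟨j, by simp⟩
  rw [Finset.prod_div_distrib, Finset.prod_div_distrib]
  have hnum : ∏ j : Fin k, Real.exp (θ (c j)) = ∏ j : Fin k, Real.exp (θ (b j)) := by
    rw [Equiv.prod_comp c (fun i => Real.exp (θ i)), Equiv.prod_comp b (fun i => Real.exp (θ i))]
  rw [hnum]
  have hden : ∏ j : Fin k, ∑ u ∈ Finset.Ici j, Real.exp (θ (b u))
      ≤ ∏ j : Fin k, ∑ u ∈ Finset.Ici j, Real.exp (θ (c u)) := by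
    apply Finset.prod_le_prod
    · intro j _; exact (hpos b j).le
    · intro j _
      have hsum : ∑ u ∈ Finset.Ici j, Real.exp (θ (c u))
          = ∑ v ∈ (Finset.Ici j).image (fun u => b.symm (c u)), Real.exp (θ (b v)) := by
        rw [Finset.sum_image (fun x _ y _ hxy => c.injective (b.symm.injective hxy))]
        simp
      rw [hsum]
      apply tail_sum_le (fun u => Real.exp (θ (b u)))
        (fun i j hij => Real.exp_le_exp.2 (hsort i j hij)) j
      rw [Finset.card_image_of_injective _
        (fun x y hxy => c.injective (b.symm.injective hxy))]
      simpa using Fin.card_Ici j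
  exact div_le_div_of_nonneg_left
    (Finset.prod_nonneg fun j _ => (Real.exp_pos _).le)
    (Finset.prod_pos fun j _ => hpos b j) hden
end

section
/- For the Gumbel-max trick: if z_i = θ_i - log(-log v_i) with v_i i.i.d. uniform on [0,1], i = 1,...,k, then P(argmax_i z_i = j) = exp(θ_j) / ∑_{i=1}^k exp(θ_i). -/
/-!
Taking logarithms twice, the event `z_i < z_j` is `v_i < v_j ^ exp (θ_i - θ_j)`.
Conditionally on `v_j = t`, the other coordinates are independent uniforms, so the event
`z_j = max` has probability `∏_{i ≠ j} t ^ exp (θ_i - θ_j) = t ^ S` with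
`S = ∑_{i ≠ j} exp (θ_i - θ_j)`, and integrating over `t` gives `1 / (S + 1)`,
which is the softmax weight `exp θ_j / ∑_i exp θ_i`.
-/

open MeasureTheory Set

theorem sub_log_neg_log_lt_iff_lt_rpow {α β a b : ℝ} (ha : a ∈ Ioo (0 : ℝ) 1)
    (hb : b ∈ Ioo (0 : ℝ) 1) :
    α - Real.log (-Real.log a) < β - Real.log (-Real.log b) ↔ a < b ^ Real.exp (α - β) := by
  have hla : 0 < -Real.log a := neg_pos.2 (Real.log_neg ha.1 ha.2)
  have hlb : 0 < -Real.log b := neg_pos.2 (Real.log_neg hb.1 hb.2)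
  calc α - Real.log (-Real.log a) < β - Real.log (-Real.log b)
      ↔ α - β < Real.log (-Real.log a / -Real.log b) := by
        rw [Real.log_div hla.ne' hlb.ne']
        constructor <;> intro <;> linarith
    _ ↔ Real.exp (α - β) * -Real.log b < -Real.log a := by
        rw [Real.lt_log_iff_exp_lt (div_pos hla hlb), lt_div_iff₀ hlb]
    _ ↔ Real.log a < Real.log (b ^ Real.exp (α - β)) := by
        rw [Real.log_rpow hb.1, mul_neg, neg_lt_neg_iff]
    _ ↔ a < b ^ Real.exp (α - β) := Real.log_lt_log_iff ha.1 (Real.rpow_pos_of_pos hb.1 _)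

theorem lintegral_Ioo_zero_one_rpow {s : ℝ} (hs : -1 < s) :
    ∫⁻ t in Ioo (0 : ℝ) 1, ENNReal.ofReal (t ^ s) = ENNReal.ofReal (1 / (s + 1)) := by
  have hint : IntegrableOn (fun t : ℝ => t ^ s) (Ioo 0 1) :=
    ((intervalIntegrable_iff_integrableOn_Ioc_of_le zero_le_one).mp
      (intervalIntegral.intervalIntegrable_rpow' hs)).mono_set Ioo_subset_Ioc_self
  rw [← ofReal_integral_eq_lintegral_ofReal hint
    (ae_restrict_of_forall_mem measurableSet_Ioo fun t ht => Real.rpow_nonneg ht.1.le _),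
    ← integral_Ioc_eq_integral_Ioo, ← intervalIntegral.integral_of_le zero_le_one,
    integral_rpow (Or.inl hs), Real.one_rpow, Real.zero_rpow (by linarith), sub_zero]

theorem uniform_Iio {x : ℝ} (hx : x ≤ 1) :
    volume.restrict (Ioo (0 : ℝ) 1) (Iio x) = ENNReal.ofReal x := by
  rw [Measure.restrict_apply measurableSet_Iio, Iio_inter_Ioo, min_eq_left hx, Real.volume_Ioo,
    sub_zero]

theorem pi_uniform_pi_Iio_rpow {ι : Type*} [Fintype ι] {t : ℝ} (ht : t ∈ Ioo (0 : ℝ) 1)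
    {c : ι → ℝ} (hc : ∀ i, 0 ≤ c i) :
    Measure.pi (fun _ : ι => volume.restrict (Ioo (0 : ℝ) 1)) (univ.pi fun i => Iio (t ^ c i))
      = ENNReal.ofReal (t ^ ∑ i, c i) := by
  rw [Measure.pi_pi, Real.rpow_sum_of_pos ht.1,
    ENNReal.ofReal_prod_of_nonneg fun i _ => Real.rpow_nonneg ht.1.le _]
  exact Finset.prod_congr rfl fun i _ => uniform_Iio (Real.rpow_le_one ht.1.le ht.2.le (hc i))

theorem pi_uniform_succAbove_lt_rpow {n : ℕ} (j : Fin (n + 1)) {c : Fin n → ℝ}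
    (hc : ∀ m, 0 ≤ c m) :
    Measure.pi (fun _ : Fin (n + 1) => volume.restrict (Ioo (0 : ℝ) 1))
        {v | ∀ m, v (j.succAbove m) < v j ^ c m}
      = ENNReal.ofReal (1 / (∑ m, c m + 1)) := by
  set B : Set (ℝ × (Fin n → ℝ)) := {p | ∀ m, p.2 m < p.1 ^ c m}
  have hB : MeasurableSet B := by
    simp only [B, ofPred_forall]
    exact .iInter fun m => measurableSet_lt measurable_snd.eval (measurable_fst.pow_const _)
  have hslice : ∀ t ∈ Ioo (0 : ℝ) 1,
      Measure.pi (fun _ : Fin n => volume.restrict (Ioo (0 : ℝ) 1)) (Prod.mk t ⁻¹' B)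
        = ENNReal.ofReal (t ^ ∑ m, c m) := fun t ht => by
    rw [← pi_uniform_pi_Iio_rpow ht hc]
    congr 1
    ext w
    simp [B]
  have hpre : {v : Fin (n + 1) → ℝ | ∀ m, v (j.succAbove m) < v j ^ c m}
      = MeasurableEquiv.piFinSuccAbove (fun _ => ℝ) j ⁻¹' B := rfl
  have hsum : -1 < ∑ m, c m := by
    linarith [Finset.sum_nonneg fun m (_ : m ∈ Finset.univ) => hc m]
  rw [hpre, (measurePreserving_piFinSuccAbove _ j).measure_preimage hB.nullMeasurableSet,
    Measure.prod_apply hB, setLIntegral_congr_fun measurableSet_Ioo hslice,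
    lintegral_Ioo_zero_one_rpow hsum]

theorem one_div_sum_exp_sub_add_one {n : ℕ} (θ : Fin (n + 1) → ℝ) (j : Fin (n + 1)) :
    1 / (∑ m, Real.exp (θ (j.succAbove m) - θ j) + 1)
      = Real.exp (θ j) / ∑ i, Real.exp (θ i) := by
  simp_rw [Fin.sum_univ_succAbove (fun i => Real.exp (θ i)) j, Real.exp_sub, ← Finset.sum_div]
  field_simp
  ring

/-- Gumbel-max trick: for `z_i = θ_i - log (-log v_i)` with `v_i` i.i.d. uniform on `[0,1]`,
the probability that `z_j` is the (a.s. unique) maximum is `exp θ_j / ∑_i exp θ_i`. -/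
theorem gumbel_max_trick (k : ℕ) (θ : Fin k → ℝ) (j : Fin k) :
    Measure.pi (fun _ : Fin k => volume.restrict (Set.Icc (0:ℝ) 1))
        {v : Fin k → ℝ | ∀ i : Fin k, i ≠ j →
          θ i - Real.log (-Real.log (v i)) < θ j - Real.log (-Real.log (v j))}
      = ENNReal.ofReal (Real.exp (θ j) / ∑ i : Fin k, Real.exp (θ i)) := by
  obtain ⟨n, rfl⟩ := Nat.exists_eq_add_one_of_ne_zero j.pos.ne'
  rw [Measure.restrict_congr_set Ioo_ae_eq_Icc.symm]
  have h_mem : ∀ᵐ v ∂Measure.pi fun _ : Fin (n + 1) => volume.restrict (Ioo (0 : ℝ) 1),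
      ∀ i, v i ∈ Ioo (0 : ℝ) 1 :=
    ae_all_iff.2 fun _ => Measure.tendsto_eval_ae_ae (ae_restrict_mem measurableSet_Ioo)
  rw [← one_div_sum_exp_sub_add_one,
    ← pi_uniform_succAbove_lt_rpow j fun _ => (Real.exp_pos _).le]
  refine measure_congr (Filter.eventuallyEq_set.2 ?_)
  filter_upwards [h_mem] with v hv
  simp only [Fin.forall_iff_succAbove j, ne_eq, not_true_eq_false,
    IsEmpty.forall_iff, Fin.succAbove_ne, not_false_eq_true, forall_const, true_and,
    sub_log_neg_log_lt_iff_lt_rpow (hv _) (hv _)]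
end
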